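/- With K_7 as in the context, the middle coefficient satisfies the self-dual functional equation in F: K_7(p, x_0, x_1, x_2, x_3, x_4) = −p^{−6} · K_7(1/p, x_0·x_1·x_2·x_3·x_4, 1/x_1, 1/x_2, 1/x_3, 1/x_4). -/
import Mathlib


open Finset

set_option maxHeartbeats 1600000

noncomputable section

/-- `F = ℚ(p, x₀, x₁, x₂, x₃, x₄)`, the field of fractions of the polynomial ring
in six indeterminates over `ℚ`. Variable `0` is `p` and variables `1,…,5` are `x₀,…,x₄`. -/
abbrev F : Type := FractionRing (MvPolynomial (Fin 6) ℚ)

/-- The monomial symmetric polynomial `sym_{a b c d}` in the four variables `y1, y2, y3, y4`: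
the sum of all *distinct* monomials `y1^{e 0} * y2^{e 1} * y3^{e 2} * y4^{e 3}` where `e`
runs over the distinct permutations of the exponent tuple `(a, b, c, d)`. -/
def sym (a b c d : ℕ) (y1 y2 y3 y4 : F) : F :=
  ∑ e ∈ Finset.image (fun σ : Equiv.Perm (Fin 4) => ![a, b, c, d] ∘ ⇑σ) Finset.univ,
    y1 ^ e 0 * y2 ^ e 1 * y3 ^ e 2 * y4 ^ e 3

/-- The indeterminate `p`. -/
def p : F := algebraMap (MvPolynomial (Fin 6) ℚ) F (MvPolynomial.X 0)

/-- The indeterminate `x₀`. -/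
def x0 : F := algebraMap (MvPolynomial (Fin 6) ℚ) F (MvPolynomial.X 1)

/-- The indeterminate `x₁`. -/
def x1 : F := algebraMap (MvPolynomial (Fin 6) ℚ) F (MvPolynomial.X 2)

/-- The indeterminate `x₂`. -/
def x2 : F := algebraMap (MvPolynomial (Fin 6) ℚ) F (MvPolynomial.X 3)

/-- The indeterminate `x₃`. -/
def x3 : F := algebraMap (MvPolynomial (Fin 6) ℚ) F (MvPolynomial.X 4)

/-- The indeterminate `x₄`. -/
def x4 : F := algebraMap (MvPolynomial (Fin 6) ℚ) F (MvPolynomial.X 5)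

/-- The coefficient `K_{7}` as a function of `p, x₀, x₁, x₂, x₃, x₄`. -/
def K7 (P y0 y1 y2 y3 y4 : F) : F :=
  let S : ℕ → ℕ → ℕ → ℕ → F := fun a b c d => sym a b c d y1 y2 y3 y4;
  -(y0 ^ 7 / P ^ 5) *
    ((P * (P ^ 2 - 1)) * (S 5 5 4 4 + S 5 5 4 3 + S 5 5 3 3 + S 5 4 4 2 + S 5 4 3 2 + S 5 3 3 2 + S 4 4 2 2 + S 4 3 2 2 + S 3 3 2 2) +
     (P ^ 4 + 4 * P ^ 3 - 4 * P - 1) * (S 5 4 4 4 + S 5 4 4 3 + S 5 4 3 3 + S 5 3 3 3 + S 4 4 4 2 + S 4 4 3 2 + S 4 3 3 2 + S 3 3 3 2) +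
     (5 * P ^ 4 + 14 * P ^ 3 - 14 * P - 5) * (S 4 4 4 4 + S 4 4 4 3 + S 4 4 3 3 + S 4 3 3 3 + S 3 3 3 3))

lemma image_comp_perm (v : Fin 4 → ℕ) (τ : Equiv.Perm (Fin 4)) :
    Finset.image (fun σ : Equiv.Perm (Fin 4) => v ∘ ⇑σ) Finset.univ
      = Finset.image (fun σ : Equiv.Perm (Fin 4) => (v ∘ ⇑τ) ∘ ⇑σ) Finset.univ := by
  ext e
  simp only [Finset.mem_image, Finset.mem_univ, true_and]
  constructor
  · rintro ⟨σ, rfl⟩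
    exact ⟨τ⁻¹ * σ, by funext i; simp [Equiv.Perm.mul_apply]⟩
  · rintro ⟨σ, rfl⟩
    exact ⟨τ * σ, by funext i; simp [Equiv.Perm.mul_apply]⟩

lemma sym_rev (a b c d : ℕ) (y1 y2 y3 y4 : F) :
    sym a b c d y1 y2 y3 y4 = sym d c b a y1 y2 y3 y4 := by
  unfold sym
  have hτ : ![d, c, b, a] = ![a, b, c, d] ∘ ⇑((Equiv.swap (0 : Fin 4) 3) * (Equiv.swap (1 : Fin 4) 2)) := by
    funext i
    fin_cases i <;> simp [Equiv.Perm.mul_apply, Equiv.swap_apply_of_ne_of_ne]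
  rw [hτ, ← image_comp_perm]

lemma pow_sub_inv (y : F) (hy : y ≠ 0) {k : ℕ} (hk : k ≤ 7) :
    y ^ (7 - k) = y ^ 7 * (y⁻¹) ^ k := by
  rw [inv_pow]
  field_simp
  rw [← pow_add]
  congr 1
  omega

lemma sym_compl (a b c d : ℕ) (ha : a ≤ 7) (hb : b ≤ 7) (hc : c ≤ 7) (hd : d ≤ 7)
    (y1 y2 y3 y4 : F) (h1 : y1 ≠ 0) (h2 : y2 ≠ 0) (h3 : y3 ≠ 0) (h4 : y4 ≠ 0) :
    sym (7 - a) (7 - b) (7 - c) (7 - d) y1 y2 y3 y4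
      = (y1 * y2 * y3 * y4) ^ 7 * sym a b c d y1⁻¹ y2⁻¹ y3⁻¹ y4⁻¹ := by
  have hvle : ∀ j : Fin 4, ![a, b, c, d] j ≤ 7 := by
    intro j; fin_cases j <;> assumption
  have hmemle : ∀ e ∈ Finset.image (fun σ : Equiv.Perm (Fin 4) => ![a, b, c, d] ∘ ⇑σ) Finset.univ,
      ∀ i : Fin 4, e i ≤ 7 := by
    intro e he i
    simp only [Finset.mem_image, Finset.mem_univ, true_and] at he
    obtain ⟨σ, rfl⟩ := he
    exact hvle (σ i)
  unfold sym
  have hv : ![7 - a, 7 - b, 7 - c, 7 - d] = (fun k => 7 - k) ∘ ![a, b, c, d] := by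
    funext i; fin_cases i <;> rfl
  rw [hv]
  have himg : Finset.image (fun σ : Equiv.Perm (Fin 4) => ((fun k => 7 - k) ∘ ![a, b, c, d]) ∘ ⇑σ) Finset.univ
      = Finset.image (fun e => (fun k => 7 - k) ∘ e)
          (Finset.image (fun σ : Equiv.Perm (Fin 4) => ![a, b, c, d] ∘ ⇑σ) Finset.univ) := by
    rw [Finset.image_image]; rfl
  rw [himg, Finset.sum_image, Finset.mul_sum]
  · apply Finset.sum_congr rfl
    intro e he
    have h0 := hmemle e he 0
    have h1' := hmemle e he 1
    have h2' := hmemle e he 2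
    have h3' := hmemle e he 3
    simp only [Function.comp_apply]
    rw [pow_sub_inv y1 h1 h0, pow_sub_inv y2 h2 h1', pow_sub_inv y3 h3 h2',
      pow_sub_inv y4 h4 h3']
    ring
  · intro e1 he1 e2 he2 h
    funext i
    have := congrFun h i
    simp only [Function.comp_apply] at this
    have b1 := hmemle e1 he1 i
    have b2 := hmemle e2 he2 i
    omega

lemma sym_dual (a b c d a' b' c' d' : ℕ) (ha : a + d' = 7) (hb : b + c' = 7)
    (hc : c + b' = 7) (hd : d + a' = 7) {y1 y2 y3 y4 : F}
    (h1 : y1 ≠ 0) (h2 : y2 ≠ 0) (h3 : y3 ≠ 0) (h4 : y4 ≠ 0) :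
    sym a b c d y1⁻¹ y2⁻¹ y3⁻¹ y4⁻¹
      = ((y1 * y2 * y3 * y4) ^ 7)⁻¹ * sym a' b' c' d' y1 y2 y3 y4 := by
  have e1 : a' = 7 - d := by omega
  have e2 : b' = 7 - c := by omega
  have e3 : c' = 7 - b := by omega
  have e4 : d' = 7 - a := by omega
  have key : sym a' b' c' d' y1 y2 y3 y4
      = (y1 * y2 * y3 * y4) ^ 7 * sym a b c d y1⁻¹ y2⁻¹ y3⁻¹ y4⁻¹ := by
    rw [e1, e2, e3, e4, sym_rev,
      sym_compl a b c d (by omega) (by omega) (by omega) (by omega) y1 y2 y3 y4 h1 h2 h3 h4]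
  rw [key, inv_mul_cancel_left₀ (pow_ne_zero _ (by
    exact mul_ne_zero (mul_ne_zero (mul_ne_zero h1 h2) h3) h4))]

lemma X_ne (i : Fin 6) : algebraMap (MvPolynomial (Fin 6) ℚ) F (MvPolynomial.X i) ≠ 0 := by
  intro h
  have hinj := IsFractionRing.injective (MvPolynomial (Fin 6) ℚ) F
  exact MvPolynomial.X_ne_zero i (hinj (by rw [h, map_zero]))

lemma key (P X0 Y SA SB SC : F) (hP : P ≠ 0) (hY : Y ≠ 0) :
    -(X0 ^ 7 * (P ^ 5)⁻¹) *
        ((P * (P ^ 2 - 1)) * SA + (P ^ 4 + 4 * P ^ 3 - 4 * P - 1) * SB +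
          (5 * P ^ 4 + 14 * P ^ 3 - 14 * P - 5) * SC)
      = -(P ^ 6)⁻¹ * (-((X0 * Y) ^ 7 * P ^ 5) *
        ((P⁻¹ * ((P ^ 2)⁻¹ - 1)) * ((Y ^ 7)⁻¹ * SA) +
          ((P ^ 4)⁻¹ + 4 * (P ^ 3)⁻¹ - 4 * P⁻¹ - 1) * ((Y ^ 7)⁻¹ * SB) +
          (5 * (P ^ 4)⁻¹ + 14 * (P ^ 3)⁻¹ - 14 * P⁻¹ - 5) * ((Y ^ 7)⁻¹ * SC))) := by
  have hPq : P * P⁻¹ = 1 := mul_inv_cancel₀ hP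
  have hYz : Y * Y⁻¹ = 1 := mul_inv_cancel₀ hY
  linear_combination
    ((-5) * P⁻¹ * X0 ^ 7 * SC + (-1) * P⁻¹ * X0 ^ 7 * SB + 5 * P⁻¹ * X0 ^ 7 * Y ^ 7 * Y⁻¹ ^ 7 * SC + P⁻¹ * X0 ^ 7 * Y ^ 7 * Y⁻¹ ^ 7 * SB + (-14) * P⁻¹ ^ 2 * X0 ^ 7 * SC + (-4) * P⁻¹ ^ 2 * X0 ^ 7 * SB + (-1) * P⁻¹ ^ 2 * X0 ^ 7 * SA + 14 * P⁻¹ ^ 2 * X0 ^ 7 * Y ^ 7 * Y⁻¹ ^ 7 * SC + 4 * P⁻¹ ^ 2 * X0 ^ 7 * Y ^ 7 * Y⁻¹ ^ 7 * SB + P⁻¹ ^ 2 * X0 ^ 7 * Y ^ 7 * Y⁻¹ ^ 7 * SA + 14 * P⁻¹ ^ 4 * X0 ^ 7 * SC + 4 * P⁻¹ ^ 4 * X0 ^ 7 * SB + P⁻¹ ^ 4 * X0 ^ 7 * SA + (-14) * P⁻¹ ^ 4 * X0 ^ 7 * Y ^ 7 * Y⁻¹ ^ 7 * SC + (-4) *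 P⁻¹ ^ 4 * X0 ^ 7 * Y ^ 7 * Y⁻¹ ^ 7 * SB + (-1) * P⁻¹ ^ 4 * X0 ^ 7 * Y ^ 7 * Y⁻¹ ^ 7 * SA + (-5) * P⁻¹ ^ 5 * X0 ^ 7 * Y ^ 7 * Y⁻¹ ^ 7 * SC + (-1) * P⁻¹ ^ 5 * X0 ^ 7 * Y ^ 7 * Y⁻¹ ^ 7 * SB + (-5) * P * P⁻¹ ^ 2 * X0 ^ 7 * SC + (-1) * P * P⁻¹ ^ 2 * X0 ^ 7 * SB + 5 * P * P⁻¹ ^ 2 * X0 ^ 7 * Y ^ 7 * Y⁻¹ ^ 7 * SC + P * P⁻¹ ^ 2 * X0 ^ 7 * Y ^ 7 * Y⁻¹ ^ 7 * SB + (-14) * P * P⁻¹ ^ 3 * X0 ^ 7 * SC + (-4) * P * P⁻¹ ^ 3 * X0 ^ 7 * SB + (-1) * P * P⁻¹ ^ 3 * X0 ^ 7 * SA + 14 * P * P⁻¹ ^ 3 * X0 ^ 7 * Y ^ 7 * Y⁻¹ ^ 7 * SC + 4 * P * P⁻¹ ^ 3 * X0 ^ 7 * Y ^ 7 * Y⁻¹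 ^ 7 * SB + P * P⁻¹ ^ 3 * X0 ^ 7 * Y ^ 7 * Y⁻¹ ^ 7 * SA + (-14) * P * P⁻¹ ^ 5 * X0 ^ 7 * Y ^ 7 * Y⁻¹ ^ 7 * SC + (-4) * P * P⁻¹ ^ 5 * X0 ^ 7 * Y ^ 7 * Y⁻¹ ^ 7 * SB + (-1) * P * P⁻¹ ^ 5 * X0 ^ 7 * Y ^ 7 * Y⁻¹ ^ 7 * SA + (-5) * P * P⁻¹ ^ 6 * X0 ^ 7 * Y ^ 7 * Y⁻¹ ^ 7 * SC + (-1) * P * P⁻¹ ^ 6 * X0 ^ 7 * Y ^ 7 * Y⁻¹ ^ 7 * SB + (-5) * P ^ 2 * P⁻¹ ^ 3 * X0 ^ 7 * SC + (-1) * P ^ 2 * P⁻¹ ^ 3 * X0 ^ 7 * SB + 5 * P ^ 2 * P⁻¹ ^ 3 * X0 ^ 7 * Y ^ 7 * Y⁻¹ ^ 7 * SC + P ^ 2 * P⁻¹ ^ 3 * X0 ^ 7 * Y ^ 7 * Y⁻¹ ^ 7 * SB + (-14) * P ^ 2 * P⁻¹ ^ 4 * X0 ^ 7 * SC + (-4)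 * P ^ 2 * P⁻¹ ^ 4 * X0 ^ 7 * SB + (-1) * P ^ 2 * P⁻¹ ^ 4 * X0 ^ 7 * SA + 14 * P ^ 2 * P⁻¹ ^ 4 * X0 ^ 7 * Y ^ 7 * Y⁻¹ ^ 7 * SC + 4 * P ^ 2 * P⁻¹ ^ 4 * X0 ^ 7 * Y ^ 7 * Y⁻¹ ^ 7 * SB + P ^ 2 * P⁻¹ ^ 4 * X0 ^ 7 * Y ^ 7 * Y⁻¹ ^ 7 * SA + (-14) * P ^ 2 * P⁻¹ ^ 6 * X0 ^ 7 * Y ^ 7 * Y⁻¹ ^ 7 * SC + (-4) * P ^ 2 * P⁻¹ ^ 6 * X0 ^ 7 * Y ^ 7 * Y⁻¹ ^ 7 * SB + (-1) * P ^ 2 * P⁻¹ ^ 6 * X0 ^ 7 * Y ^ 7 * Y⁻¹ ^ 7 * SA + (-5) * P ^ 2 * P⁻¹ ^ 7 * X0 ^ 7 * Y ^ 7 * Y⁻¹ ^ 7 * SC + (-1) * P ^ 2 * P⁻¹ ^ 7 * X0 ^ 7 * Y ^ 7 * Y⁻¹ ^ 7 * SB + (-5) * P ^ 3 * P⁻¹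 ^ 4 * X0 ^ 7 * SC + (-1) * P ^ 3 * P⁻¹ ^ 4 * X0 ^ 7 * SB + 5 * P ^ 3 * P⁻¹ ^ 4 * X0 ^ 7 * Y ^ 7 * Y⁻¹ ^ 7 * SC + P ^ 3 * P⁻¹ ^ 4 * X0 ^ 7 * Y ^ 7 * Y⁻¹ ^ 7 * SB + 14 * P ^ 3 * P⁻¹ ^ 5 * X0 ^ 7 * Y ^ 7 * Y⁻¹ ^ 7 * SC + 4 * P ^ 3 * P⁻¹ ^ 5 * X0 ^ 7 * Y ^ 7 * Y⁻¹ ^ 7 * SB + P ^ 3 * P⁻¹ ^ 5 * X0 ^ 7 * Y ^ 7 * Y⁻¹ ^ 7 * SA + (-14) * P ^ 3 * P⁻¹ ^ 7 * X0 ^ 7 * Y ^ 7 * Y⁻¹ ^ 7 * SC + (-4) * P ^ 3 * P⁻¹ ^ 7 * X0 ^ 7 * Y ^ 7 * Y⁻¹ ^ 7 * SB + (-1) * P ^ 3 * P⁻¹ ^ 7 * X0 ^ 7 * Y ^ 7 * Y⁻¹ ^ 7 * SA + (-5) * P ^ 3 * P⁻¹ ^ 8 * X0 ^ 7 * Y ^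 7 * Y⁻¹ ^ 7 * SC + (-1) * P ^ 3 * P⁻¹ ^ 8 * X0 ^ 7 * Y ^ 7 * Y⁻¹ ^ 7 * SB + 5 * P ^ 4 * P⁻¹ ^ 5 * X0 ^ 7 * Y ^ 7 * Y⁻¹ ^ 7 * SC + P ^ 4 * P⁻¹ ^ 5 * X0 ^ 7 * Y ^ 7 * Y⁻¹ ^ 7 * SB + 14 * P ^ 4 * P⁻¹ ^ 6 * X0 ^ 7 * Y ^ 7 * Y⁻¹ ^ 7 * SC + 4 * P ^ 4 * P⁻¹ ^ 6 * X0 ^ 7 * Y ^ 7 * Y⁻¹ ^ 7 * SB + P ^ 4 * P⁻¹ ^ 6 * X0 ^ 7 * Y ^ 7 * Y⁻¹ ^ 7 * SA + (-14) * P ^ 4 * P⁻¹ ^ 8 * X0 ^ 7 * Y ^ 7 * Y⁻¹ ^ 7 * SC + (-4) * P ^ 4 * P⁻¹ ^ 8 * X0 ^ 7 * Y ^ 7 * Y⁻¹ ^ 7 * SB + (-1) * P ^ 4 * P⁻¹ ^ 8 * X0 ^ 7 * Y ^ 7 * Y⁻¹ ^ 7 * SA + (-5) * P ^ 4 * P⁻¹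 ^ 9 * X0 ^ 7 * Y ^ 7 * Y⁻¹ ^ 7 * SC + (-1) * P ^ 4 * P⁻¹ ^ 9 * X0 ^ 7 * Y ^ 7 * Y⁻¹ ^ 7 * SB) * hPq +
    (5 * P⁻¹ * X0 ^ 7 * SC + P⁻¹ * X0 ^ 7 * SB + 5 * P⁻¹ * X0 ^ 7 * Y * Y⁻¹ * SC + P⁻¹ * X0 ^ 7 * Y * Y⁻¹ * SB + 5 * P⁻¹ * X0 ^ 7 * Y ^ 2 * Y⁻¹ ^ 2 * SC + P⁻¹ * X0 ^ 7 * Y ^ 2 * Y⁻¹ ^ 2 * SB + 5 * P⁻¹ * X0 ^ 7 * Y ^ 3 * Y⁻¹ ^ 3 * SC + P⁻¹ * X0 ^ 7 * Y ^ 3 * Y⁻¹ ^ 3 * SB + 5 * P⁻¹ * X0 ^ 7 * Y ^ 4 * Y⁻¹ ^ 4 * SC + P⁻¹ * X0 ^ 7 * Y ^ 4 * Y⁻¹ ^ 4 * SB + 5 * P⁻¹ * X0 ^ 7 * Y ^ 5 * Y⁻¹ ^ 5 * SC + P⁻¹ * X0 ^ 7 * Y ^ 5 * Y⁻¹ ^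 5 * SB + 5 * P⁻¹ * X0 ^ 7 * Y ^ 6 * Y⁻¹ ^ 6 * SC + P⁻¹ * X0 ^ 7 * Y ^ 6 * Y⁻¹ ^ 6 * SB + 14 * P⁻¹ ^ 2 * X0 ^ 7 * SC + 4 * P⁻¹ ^ 2 * X0 ^ 7 * SB + P⁻¹ ^ 2 * X0 ^ 7 * SA + 14 * P⁻¹ ^ 2 * X0 ^ 7 * Y * Y⁻¹ * SC + 4 * P⁻¹ ^ 2 * X0 ^ 7 * Y * Y⁻¹ * SB + P⁻¹ ^ 2 * X0 ^ 7 * Y * Y⁻¹ * SA + 14 * P⁻¹ ^ 2 * X0 ^ 7 * Y ^ 2 * Y⁻¹ ^ 2 * SC + 4 * P⁻¹ ^ 2 * X0 ^ 7 * Y ^ 2 * Y⁻¹ ^ 2 * SB + P⁻¹ ^ 2 * X0 ^ 7 * Y ^ 2 * Y⁻¹ ^ 2 * SA + 14 * P⁻¹ ^ 2 * X0 ^ 7 * Y ^ 3 * Y⁻¹ ^ 3 * SC + 4 * P⁻¹ ^ 2 * X0 ^ 7 * Y ^ 3 * Y⁻¹ ^ 3 * SB + P⁻¹ ^ 2 *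 X0 ^ 7 * Y ^ 3 * Y⁻¹ ^ 3 * SA + 14 * P⁻¹ ^ 2 * X0 ^ 7 * Y ^ 4 * Y⁻¹ ^ 4 * SC + 4 * P⁻¹ ^ 2 * X0 ^ 7 * Y ^ 4 * Y⁻¹ ^ 4 * SB + P⁻¹ ^ 2 * X0 ^ 7 * Y ^ 4 * Y⁻¹ ^ 4 * SA + 14 * P⁻¹ ^ 2 * X0 ^ 7 * Y ^ 5 * Y⁻¹ ^ 5 * SC + 4 * P⁻¹ ^ 2 * X0 ^ 7 * Y ^ 5 * Y⁻¹ ^ 5 * SB + P⁻¹ ^ 2 * X0 ^ 7 * Y ^ 5 * Y⁻¹ ^ 5 * SA + 14 * P⁻¹ ^ 2 * X0 ^ 7 * Y ^ 6 * Y⁻¹ ^ 6 * SC + 4 * P⁻¹ ^ 2 * X0 ^ 7 * Y ^ 6 * Y⁻¹ ^ 6 * SB + P⁻¹ ^ 2 * X0 ^ 7 * Y ^ 6 * Y⁻¹ ^ 6 * SA + (-14) * P⁻¹ ^ 4 * X0 ^ 7 * SC + (-4) * P⁻¹ ^ 4 * X0 ^ 7 * SB + (-1) * P⁻¹ ^ 4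 * X0 ^ 7 * SA + (-14) * P⁻¹ ^ 4 * X0 ^ 7 * Y * Y⁻¹ * SC + (-4) * P⁻¹ ^ 4 * X0 ^ 7 * Y * Y⁻¹ * SB + (-1) * P⁻¹ ^ 4 * X0 ^ 7 * Y * Y⁻¹ * SA + (-14) * P⁻¹ ^ 4 * X0 ^ 7 * Y ^ 2 * Y⁻¹ ^ 2 * SC + (-4) * P⁻¹ ^ 4 * X0 ^ 7 * Y ^ 2 * Y⁻¹ ^ 2 * SB + (-1) * P⁻¹ ^ 4 * X0 ^ 7 * Y ^ 2 * Y⁻¹ ^ 2 * SA + (-14) * P⁻¹ ^ 4 * X0 ^ 7 * Y ^ 3 * Y⁻¹ ^ 3 * SC + (-4) * P⁻¹ ^ 4 * X0 ^ 7 * Y ^ 3 * Y⁻¹ ^ 3 * SB + (-1) * P⁻¹ ^ 4 * X0 ^ 7 * Y ^ 3 * Y⁻¹ ^ 3 * SA + (-14) * P⁻¹ ^ 4 * X0 ^ 7 * Y ^ 4 * Y⁻¹ ^ 4 * SC + (-4) * P⁻¹ ^ 4 * X0 ^ 7 * Y ^ 4 * Y⁻¹ ^ 4 * SB + (-1) *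 P⁻¹ ^ 4 * X0 ^ 7 * Y ^ 4 * Y⁻¹ ^ 4 * SA + (-14) * P⁻¹ ^ 4 * X0 ^ 7 * Y ^ 5 * Y⁻¹ ^ 5 * SC + (-4) * P⁻¹ ^ 4 * X0 ^ 7 * Y ^ 5 * Y⁻¹ ^ 5 * SB + (-1) * P⁻¹ ^ 4 * X0 ^ 7 * Y ^ 5 * Y⁻¹ ^ 5 * SA + (-14) * P⁻¹ ^ 4 * X0 ^ 7 * Y ^ 6 * Y⁻¹ ^ 6 * SC + (-4) * P⁻¹ ^ 4 * X0 ^ 7 * Y ^ 6 * Y⁻¹ ^ 6 * SB + (-1) * P⁻¹ ^ 4 * X0 ^ 7 * Y ^ 6 * Y⁻¹ ^ 6 * SA + (-5) * P⁻¹ ^ 5 * X0 ^ 7 * SC + (-1) * P⁻¹ ^ 5 * X0 ^ 7 * SB + (-5) * P⁻¹ ^ 5 * X0 ^ 7 * Y * Y⁻¹ * SC + (-1) * P⁻¹ ^ 5 * X0 ^ 7 * Y * Y⁻¹ * SB + (-5) * P⁻¹ ^ 5 * X0 ^ 7 * Y ^ 2 * Y⁻¹ ^ 2 * SC + (-1)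 * P⁻¹ ^ 5 * X0 ^ 7 * Y ^ 2 * Y⁻¹ ^ 2 * SB + (-5) * P⁻¹ ^ 5 * X0 ^ 7 * Y ^ 3 * Y⁻¹ ^ 3 * SC + (-1) * P⁻¹ ^ 5 * X0 ^ 7 * Y ^ 3 * Y⁻¹ ^ 3 * SB + (-5) * P⁻¹ ^ 5 * X0 ^ 7 * Y ^ 4 * Y⁻¹ ^ 4 * SC + (-1) * P⁻¹ ^ 5 * X0 ^ 7 * Y ^ 4 * Y⁻¹ ^ 4 * SB + (-5) * P⁻¹ ^ 5 * X0 ^ 7 * Y ^ 5 * Y⁻¹ ^ 5 * SC + (-1) * P⁻¹ ^ 5 * X0 ^ 7 * Y ^ 5 * Y⁻¹ ^ 5 * SB + (-5) * P⁻¹ ^ 5 * X0 ^ 7 * Y ^ 6 * Y⁻¹ ^ 6 * SC + (-1) * P⁻¹ ^ 5 * X0 ^ 7 * Y ^ 6 * Y⁻¹ ^ 6 * SB) * hYz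

/-- `K₇(p, x₀, …, x₄) = -p⁻⁶ K₇(1/p, x₀x₁x₂x₃x₄, 1/x₁, 1/x₂, 1/x₃, 1/x₄)` (self-dual middle coefficient). -/
theorem hecke_series_K7_self_dual :
    K7 p x0 x1 x2 x3 x4 = -(p ^ 6)⁻¹ * K7 p⁻¹ (x0 * x1 * x2 * x3 * x4) x1⁻¹ x2⁻¹ x3⁻¹ x4⁻¹ := by
  have hp : p ≠ 0 := X_ne 0
  have hx1 : x1 ≠ 0 := X_ne 2
  have hx2 : x2 ≠ 0 := X_ne 3
  have hx3 : x3 ≠ 0 := X_ne 4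
  have hx4 : x4 ≠ 0 := X_ne 5
  have hA : sym 5 5 4 4 x1⁻¹ x2⁻¹ x3⁻¹ x4⁻¹ + sym 5 5 4 3 x1⁻¹ x2⁻¹ x3⁻¹ x4⁻¹ + sym 5 5 3 3 x1⁻¹ x2⁻¹ x3⁻¹ x4⁻¹ + sym 5 4 4 2 x1⁻¹ x2⁻¹ x3⁻¹ x4⁻¹ + sym 5 4 3 2 x1⁻¹ x2⁻¹ x3⁻¹ x4⁻¹ + sym 5 3 3 2 x1⁻¹ x2⁻¹ x3⁻¹ x4⁻¹ + sym 4 4 2 2 x1⁻¹ x2⁻¹ x3⁻¹ x4⁻¹ + sym 4 3 2 2 x1⁻¹ x2⁻¹ x3⁻¹ x4⁻¹ + sym 3 3 2 2 x1⁻¹ x2⁻¹ x3⁻¹ x4⁻¹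
      = ((x1 * x2 * x3 * x4) ^ 7)⁻¹ * (sym 5 5 4 4 x1 x2 x3 x4 + sym 5 5 4 3 x1 x2 x3 x4 + sym 5 5 3 3 x1 x2 x3 x4 + sym 5 4 4 2 x1 x2 x3 x4 + sym 5 4 3 2 x1 x2 x3 x4 + sym 5 3 3 2 x1 x2 x3 x4 + sym 4 4 2 2 x1 x2 x3 x4 + sym 4 3 2 2 x1 x2 x3 x4 + sym 3 3 2 2 x1 x2 x3 x4) := by
    rw [sym_dual 5 5 4 4 3 3 2 2 rfl rfl rfl rfl hx1 hx2 hx3 hx4,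
      sym_dual 5 5 4 3 4 3 2 2 rfl rfl rfl rfl hx1 hx2 hx3 hx4,
      sym_dual 5 5 3 3 4 4 2 2 rfl rfl rfl rfl hx1 hx2 hx3 hx4,
      sym_dual 5 4 4 2 5 3 3 2 rfl rfl rfl rfl hx1 hx2 hx3 hx4,
      sym_dual 5 4 3 2 5 4 3 2 rfl rfl rfl rfl hx1 hx2 hx3 hx4,
      sym_dual 5 3 3 2 5 4 4 2 rfl rfl rfl rfl hx1 hx2 hx3 hx4,
      sym_dual 4 4 2 2 5 5 3 3 rfl rfl rfl rfl hx1 hx2 hx3 hx4,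
      sym_dual 4 3 2 2 5 5 4 3 rfl rfl rfl rfl hx1 hx2 hx3 hx4,
      sym_dual 3 3 2 2 5 5 4 4 rfl rfl rfl rfl hx1 hx2 hx3 hx4]
    ring
  have hB : sym 5 4 4 4 x1⁻¹ x2⁻¹ x3⁻¹ x4⁻¹ + sym 5 4 4 3 x1⁻¹ x2⁻¹ x3⁻¹ x4⁻¹ + sym 5 4 3 3 x1⁻¹ x2⁻¹ x3⁻¹ x4⁻¹ + sym 5 3 3 3 x1⁻¹ x2⁻¹ x3⁻¹ x4⁻¹ + sym 4 4 4 2 x1⁻¹ x2⁻¹ x3⁻¹ x4⁻¹ + sym 4 4 3 2 x1⁻¹ x2⁻¹ x3⁻¹ x4⁻¹ + sym 4 3 3 2 x1⁻¹ x2⁻¹ x3⁻¹ x4⁻¹ + sym 3 3 3 2 x1⁻¹ x2⁻¹ x3⁻¹ x4⁻¹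
      = ((x1 * x2 * x3 * x4) ^ 7)⁻¹ * (sym 5 4 4 4 x1 x2 x3 x4 + sym 5 4 4 3 x1 x2 x3 x4 + sym 5 4 3 3 x1 x2 x3 x4 + sym 5 3 3 3 x1 x2 x3 x4 + sym 4 4 4 2 x1 x2 x3 x4 + sym 4 4 3 2 x1 x2 x3 x4 + sym 4 3 3 2 x1 x2 x3 x4 + sym 3 3 3 2 x1 x2 x3 x4) := by
    rw [sym_dual 5 4 4 4 3 3 3 2 rfl rfl rfl rfl hx1 hx2 hx3 hx4,
      sym_dual 5 4 4 3 4 3 3 2 rfl rfl rfl rfl hx1 hx2 hx3 hx4,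
      sym_dual 5 4 3 3 4 4 3 2 rfl rfl rfl rfl hx1 hx2 hx3 hx4,
      sym_dual 5 3 3 3 4 4 4 2 rfl rfl rfl rfl hx1 hx2 hx3 hx4,
      sym_dual 4 4 4 2 5 3 3 3 rfl rfl rfl rfl hx1 hx2 hx3 hx4,
      sym_dual 4 4 3 2 5 4 3 3 rfl rfl rfl rfl hx1 hx2 hx3 hx4,
      sym_dual 4 3 3 2 5 4 4 3 rfl rfl rfl rfl hx1 hx2 hx3 hx4,
      sym_dual 3 3 3 2 5 4 4 4 rfl rfl rfl rfl hx1 hx2 hx3 hx4]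
    ring
  have hC : sym 4 4 4 4 x1⁻¹ x2⁻¹ x3⁻¹ x4⁻¹ + sym 4 4 4 3 x1⁻¹ x2⁻¹ x3⁻¹ x4⁻¹ + sym 4 4 3 3 x1⁻¹ x2⁻¹ x3⁻¹ x4⁻¹ + sym 4 3 3 3 x1⁻¹ x2⁻¹ x3⁻¹ x4⁻¹ + sym 3 3 3 3 x1⁻¹ x2⁻¹ x3⁻¹ x4⁻¹
      = ((x1 * x2 * x3 * x4) ^ 7)⁻¹ * (sym 4 4 4 4 x1 x2 x3 x4 + sym 4 4 4 3 x1 x2 x3 x4 + sym 4 4 3 3 x1 x2 x3 x4 + sym 4 3 3 3 x1 x2 x3 x4 + sym 3 3 3 3 x1 x2 x3 x4) := by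
    rw [sym_dual 4 4 4 4 3 3 3 3 rfl rfl rfl rfl hx1 hx2 hx3 hx4,
      sym_dual 4 4 4 3 4 3 3 3 rfl rfl rfl rfl hx1 hx2 hx3 hx4,
      sym_dual 4 4 3 3 4 4 3 3 rfl rfl rfl rfl hx1 hx2 hx3 hx4,
      sym_dual 4 3 3 3 4 4 4 3 rfl rfl rfl rfl hx1 hx2 hx3 hx4,
      sym_dual 3 3 3 3 4 4 4 4 rfl rfl rfl rfl hx1 hx2 hx3 hx4]
    ring
  simp only [K7]
  rw [hA, hB, hC]
  generalize (sym 5 5 4 4 x1 x2 x3 x4 + sym 5 5 4 3 x1 x2 x3 x4 + sym 5 5 3 3 x1 x2 x3 x4 + sym 5 4 4 2 x1 x2 x3 x4 + sym 5 4 3 2 x1 x2 x3 x4 + sym 5 3 3 2 x1 x2 x3 x4 + sym 4 4 2 2 x1 x2 x3 x4 + sym 4 3 2 2 x1 x2 x3 x4 + sym 3 3 2 2 x1 x2 x3 x4 : F) = SA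
  generalize (sym 5 4 4 4 x1 x2 x3 x4 + sym 5 4 4 3 x1 x2 x3 x4 + sym 5 4 3 3 x1 x2 x3 x4 + sym 5 3 3 3 x1 x2 x3 x4 + sym 4 4 4 2 x1 x2 x3 x4 + sym 4 4 3 2 x1 x2 x3 x4 + sym 4 3 3 2 x1 x2 x3 x4 + sym 3 3 3 2 x1 x2 x3 x4 : F) = SB
  generalize (sym 4 4 4 4 x1 x2 x3 x4 + sym 4 4 4 3 x1 x2 x3 x4 + sym 4 4 3 3 x1 x2 x3 x4 + sym 4 3 3 3 x1 x2 x3 x4 + sym 3 3 3 3 x1 x2 x3 x4 : F) = SC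
  rw [show (x0 * x1 * x2 * x3 * x4 : F) = x0 * (x1 * x2 * x3 * x4) by ring]
  simp only [inv_pow, div_eq_mul_inv, inv_inv]
  exact key p x0 (x1 * x2 * x3 * x4) SA SB SC hp
    (mul_ne_zero (mul_ne_zero (mul_ne_zero hx1 hx2) hx3) hx4)

end
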